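/- For letters a, b and nonempty words v, w in a quasi-shuffle algebra (k⟨A⟩, *), one has a(v*(b⋄w)) + a⋄(v*(bw)) + b((a⋄v)*w) + b⋄((av)*w) = (av)*(b⋄w) + (a⋄v)*(bw) + 2(a⋄b)(v*w). -/

import Mathlib

/-!
Quasi-shuffle algebras (Hoffman–Ihara).  We model the span `kA` of the alphabet
(with its commutative associative product `⋄`, written `*` in `L`) as a
non-unital commutative `k`-algebra `L`, and the word algebra `k⟨A⟩` as the
tensor algebra `TensorAlgebra k L`, in which a word `a₁⋯aₙ` is the product
`ι a₁ * ⋯ * ι aₙ`.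
-/

open TensorAlgebra

variable (k : Type*) [Field k]
variable {L : Type*} [NonUnitalCommRing L] [Module k L]
  [SMulCommClass k L L] [IsScalarTower k L L]

/-- The word `a₁⋯aₙ` as an element of the tensor algebra. -/
def word (l : List L) : TensorAlgebra k L := (l.map fun a => TensorAlgebra.ι k a).prod

/-!
Since `v` and `w` are nonempty, every quasi-shuffle product in the identity can be expanded by
one step of the recursion. Because words span the tensor algebra, `D a (ι c * x) = ι (a ⋄ c) * x`
holds for every `x`, so `D a` passes through these expansions, and both sides become the same
combination of products of shorter words, up to associativity and commutativity of `⋄`.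
-/

section

omit [SMulCommClass k L L] [IsScalarTower k L L]

lemma word_cons (c : L) (u : List L) : word k (c :: u) = ι k c * word k u := by
  simp [word]

lemma span_range_word : Submodule.span k (Set.range (word k (L := L))) = ⊤ := by
  refine eq_top_iff.2 fun x _ => ?_
  have hx : x ∈ Subalgebra.toSubmodule (Algebra.adjoin k (Set.range (ι k (M := L)))) := by
    simp [adjoin_range_ι]
  rw [Algebra.adjoin_eq_span] at hx
  refine Submodule.span_mono ?_ hx
  rintro y hy
  obtain ⟨l, hl, rfl⟩ := Submonoid.exists_list_of_mem_closure hy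
  clear hy
  induction l with
  | nil => exact ⟨[], rfl⟩
  | cons z l ih =>
    obtain ⟨c, rfl⟩ := hl z List.mem_cons_self
    obtain ⟨u, hu⟩ := ih fun y hy => hl y (List.mem_cons_of_mem _ hy)
    exact ⟨c :: u, by rw [word_cons, hu, List.prod_cons]⟩

lemma linearMap_ext_word {M : Type*} [AddCommMonoid M] [Module k M]
    {f g : TensorAlgebra k L →ₗ[k] M} (h : ∀ l, f (word k l) = g (word k l)) : f = g :=
  LinearMap.ext_on_range (span_range_word k) h

lemma map_mul_of_map_mul_word (D : TensorAlgebra k L →ₗ[k] TensorAlgebra k L)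
    {p q : TensorAlgebra k L} (h : ∀ u, D (p * word k u) = q * word k u)
    (x : TensorAlgebra k L) : D (p * x) = q * x :=
  LinearMap.congr_fun (linearMap_ext_word k (f := D ∘ₗ LinearMap.mulLeft k p)
    (g := LinearMap.mulLeft k q) h) x

end

theorem stmt2
    (m : TensorAlgebra k L →ₗ[k] TensorAlgebra k L →ₗ[k] TensorAlgebra k L)
    (hmrec : ∀ (a b : L) (v w : List L),
      m (TensorAlgebra.ι k a * word k v) (TensorAlgebra.ι k b * word k w)
        = TensorAlgebra.ι k a * m (word k v) (TensorAlgebra.ι k b * word k w)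
          + TensorAlgebra.ι k b * m (TensorAlgebra.ι k a * word k v) (word k w)
          + TensorAlgebra.ι k (a * b) * m (word k v) (word k w))
    (D : L → TensorAlgebra k L →ₗ[k] TensorAlgebra k L)
    (hDw : ∀ (a c : L) (u : List L),
      D a (TensorAlgebra.ι k c * word k u) = TensorAlgebra.ι k (a * c) * word k u) :
    ∀ (a b : L) (v w : List L), v ≠ [] → w ≠ [] →
      TensorAlgebra.ι k a * m (word k v) (D b (word k w))
        + D a (m (word k v) (word k (b :: w)))
        + TensorAlgebra.ι k b * m (D a (word k v)) (word k w)
        + D b (m (word k (a :: v)) (word k w))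
      = m (word k (a :: v)) (D b (word k w))
        + m (D a (word k v)) (word k (b :: w))
        + 2 • (TensorAlgebra.ι k (a * b) * m (word k v) (word k w)) := by
  intro a b v w hv hw
  obtain ⟨c, v, rfl⟩ := List.exists_cons_of_ne_nil hv
  obtain ⟨d, w, rfl⟩ := List.exists_cons_of_ne_nil hw
  have hrec : ∀ (a b : L) (v w : List L), m (word k (a :: v)) (word k (b :: w))
      = ι k a * m (word k v) (word k (b :: w)) + ι k b * m (word k (a :: v)) (word k w)
        + ι k (a * b) * m (word k v) (word k w) := by
    simpa only [word_cons] using hmrec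
  have hDword : ∀ a c u, D a (word k (c :: u)) = word k ((a * c) :: u) := by
    simpa only [word_cons] using hDw
  have hDmul : ∀ a c x, D a (ι k c * x) = ι k (a * c) * x := fun a c =>
    map_mul_of_map_mul_word k (D a) (hDw a c)
  rw [hDword, hDword, hrec c b, hrec a d, hrec a (b * d), hrec (a * c) b]
  simp only [map_add, hDmul, word_cons]
  rw [mul_assoc a c b, mul_left_comm b a d, mul_comm b a]
  abel
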